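/- For all integers ℓ,s,t ≥ 1 and m ≥ 2, the sums F_{(ℓ,m;s,t)}, F_{(ℓ,m−1;s+1,t)} and F_{(ℓ,m−1;s,t)} converge, and (t−m+1) · F_{(ℓ,m;s,t)} = F_{(ℓ,m;s)} + F_{(ℓ,m−1;s+1,t)} − F_{(ℓ,m−1;s,t)}. -/

import Mathlib

open scoped BigOperators

/-- A cell of the plane `ℤ²`. -/
abbrev Cell : Type := ℤ × ℤ

/-- The partial order `⊴` on `ℤ²`: `(a,b) ⊴ (a',b')` iff `a ≥ a'` and `b ≥ b'`. -/
def cellLE (u v : Cell) : Prop := v.1 ≤ u.1 ∧ v.2 ≤ u.2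

/-- The cylinder `C_ω = ℤ²/ℤω`. -/
abbrev Cyl (ω : Cell) : Type := Cell ⧸ AddSubgroup.zmultiples ω

/-- The natural projection `π : ℤ² → C_ω`. -/
def pr (ω : Cell) : Cell → Cyl ω := QuotientAddGroup.mk

/-- The induced relation `⊴` on the cylinder: `x ⊴ y` iff some lifts satisfy `x̃ ⊴ ỹ`. -/
def cylLE (ω : Cell) (x y : Cyl ω) : Prop :=
  ∃ u v : Cell, pr ω u = x ∧ pr ω v = y ∧ cellLE u v

/-- The hook of `x` in a diagram `Θ ⊆ ℤ²`. -/
def hookSet (Θ : Set Cell) (x : Cell) : Set Cell :=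
  Θ ∩ ({y | ∃ k : ℤ, 0 ≤ k ∧ y = x + (k, 0)} ∪ {y | ∃ k : ℤ, 1 ≤ k ∧ y = x + (0, k)})

/-- The hook length of `x` in `Θ`. -/
noncomputable def hookLen (Θ : Set Cell) (x : Cell) : ℕ := (hookSet Θ x).ncard

/-- The hook length of a cell of the cylinder, computed via a lift. -/
noncomputable def cylHook (ω : Cell) (Θ : Set Cell) (x : Cyl ω) : ℕ :=
  hookLen Θ (Quotient.out x)

/-- The `ℤω`-orbit of a cell. -/
def zline (ω y : Cell) : Set Cell := {z | ∃ k : ℤ, z = y + k • ω}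

/-- `S + ℤω`. -/
def perClosure (ω : Cell) (S : Set Cell) : Set Cell := {z | ∃ y ∈ S, ∃ k : ℤ, z = y + k • ω}

/-- Translation of a set of cells by `u`. -/
def shiftSet (u : Cell) (S : Set Cell) : Set Cell := (· + u) '' S

/-- The semi-infinite diagram `λ̄ = {(a,b) : 1 ≤ a ≤ m, b ≤ λ_a}`. -/
def lowerDiag (m : ℤ) (lam : ℤ → ℤ) : Set Cell := {p | 1 ≤ p.1 ∧ p.1 ≤ m ∧ p.2 ≤ lam p.1}

/-- The Young diagram `{(a,b) : 1 ≤ a ≤ m, 1 ≤ b ≤ λ_a}`. -/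
def youngDiag (m : ℤ) (lam : ℤ → ℤ) : Set Cell :=
  {p | 1 ≤ p.1 ∧ p.1 ≤ m ∧ 1 ≤ p.2 ∧ p.2 ≤ lam p.1}

/-- The skew diagram `λ/μ = {(a,b) : 1 ≤ a ≤ m, μ_a < b ≤ λ_a}`. -/
def skewDiag (m : ℤ) (lam mu : ℤ → ℤ) : Set Cell :=
  {p | 1 ≤ p.1 ∧ p.1 ≤ m ∧ mu p.1 < p.2 ∧ p.2 ≤ lam p.1}

/-- The periodic diagram `λ̃ = λ̄ + ℤ(m,−ℓ)`. -/
def perDiag (m l : ℤ) (lam : ℤ → ℤ) : Set Cell := perClosure (m, -l) (lowerDiag m lam)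

/-- The cylindric diagram `λ̂ = π(λ̃)`. -/
def cylDiag (m l : ℤ) (lam : ℤ → ℤ) : Set (Cyl (m, -l)) := pr (m, -l) '' perDiag m l lam

/-- `λ ∈ P_{m,ℓ}`: an `ℓ`-restricted generalized partition of length `m`
(only the values `λ_1, …, λ_m` are relevant). -/
def IsRestricted (m l : ℤ) (lam : ℤ → ℤ) : Prop :=
  (∀ a : ℤ, 1 ≤ a → a < m → lam (a + 1) ≤ lam a) ∧ lam 1 - lam m ≤ l

/-- `y` is a `D`-active cell (with ambient diagram `Θ`). -/
def IsActive (Θ D : Set Cell) (y : Cell) : Prop :=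
  y ∈ D ∧ y + (1, 0) ∈ Θ \ D ∧ y + (0, 1) ∈ Θ \ D ∧ y + (1, 1) ∈ Θ \ D

/-- One elementary excitation inside `Θ`. -/
def exciteStep (Θ D E : Set Cell) : Prop :=
  ∃ y, IsActive Θ D y ∧ E = (D \ {y}) ∪ {y + (1, 1)}

/-- The excited diagrams of `M` in `Θ`. -/
def ExcitedSet (Θ M : Set Cell) : Set (Set Cell) :=
  {D | Relation.ReflTransGen (exciteStep Θ) M D}

/-- One periodic elementary excitation inside `Θ`. -/
def pExciteStep (ω : Cell) (Θ D E : Set Cell) : Prop :=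
  ∃ y, IsActive Θ D y ∧ E = (D \ zline ω y) ∪ zline ω (y + (1, 1))

/-- The periodic excited diagrams of `M` in `Θ`. -/
def PExcitedSet (ω : Cell) (Θ M : Set Cell) : Set (Set Cell) :=
  {D | Relation.ReflTransGen (pExciteStep ω Θ) M D}

/-- The cylindric excited diagrams: images under `π` of the periodic excited diagrams. -/
def CylExcitedSet (ω : Cell) (Θ M : Set Cell) : Set (Set (Cyl ω)) :=
  (fun D => pr ω '' D) '' PExcitedSet ω Θ M

/-- A linear extension of `S` (with respect to a relation `R`): a bijection
`ε : S → {1,…,n}` with `ε x < ε y` whenever `R x y` and `x ≠ y`. -/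
def IsLinExt {α : Type} (R : α → α → Prop) (S : Set α) (n : ℕ) (ε : S → Fin n) : Prop :=
  Function.Bijective ε ∧ ∀ x y : S, R (x : α) (y : α) → (x : α) ≠ (y : α) → ε x < ε y

/-- The number of linear extensions of `S`. -/
noncomputable def linExtCount {α : Type} (R : α → α → Prop) (S : Set α) (n : ℕ) : ℕ :=
  Nat.card {ε : S → Fin n // IsLinExt R S n ε}

/-- A reverse standard tableau on a (skew) diagram `S` of `n` cells. -/
def IsRST (S : Set Cell) (n : ℕ) (ε : S → Fin n) : Prop :=
  Function.Bijective ε ∧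
    (∀ x y : S, (y : Cell) = (x : Cell) + (0, 1) → ε y < ε x) ∧
    (∀ x y : S, (y : Cell) = (x : Cell) + (1, 0) → ε y < ε x)

/-- An `ℓ`-restricted reverse standard tableau on a skew diagram of length `m`. -/
def IsRSTl (m l : ℤ) (S : Set Cell) (n : ℕ) (ε : S → Fin n) : Prop :=
  IsRST S n ε ∧
    ∀ x y : S, (x : Cell).1 = 1 → (y : Cell) = (m, (x : Cell).2 - l) → ε x < ε y

/-- One lattice step: right by `(1,0)` or down by `(0,−1)`. -/
def stepRel (a b : Cell) : Prop := b - a = (1, 0) ∨ b - a = (0, -1)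

/-- `p` is (the list of cells of) a lattice path from `u` to `v`. -/
def IsLatticePathList (u v : Cell) (p : List Cell) : Prop :=
  p.head? = some u ∧ p.getLast? = some v ∧ p.Chain' stepRel

/-- `L(u,v)`: lattice paths from `u` to `v`, identified with their underlying sets of cells. -/
def LPath (u v : Cell) : Set (Set Cell) :=
  {S | ∃ p : List Cell, IsLatticePathList u v p ∧ S = {x | x ∈ p}}

/-- `L_Θ(u,v)`: lattice paths from `u` to `v` contained in `Θ`. -/
def LPathIn (Θ : Set Cell) (u v : Cell) : Set (Set Cell) := {S | S ∈ LPath u v ∧ S ⊆ Θ}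

/-- One lattice step on the cylinder. -/
def cylStep (ω : Cell) (x y : Cyl ω) : Prop :=
  ∃ u v : Cell, pr ω u = x ∧ pr ω v = y ∧ stepRel u v

/-- `S` is a non-intersecting loop of length `n` in the cylinder. -/
def IsNILoop (ω : Cell) (n : ℕ) (S : Set (Cyl ω)) : Prop :=
  ∃ u : ZMod n → Cyl ω, Function.Injective u ∧ S = Set.range u ∧
    ∀ i : ZMod n, cylStep ω (u i) (u (i + 1))

/-- `h^{s,t}_{m,ℓ}(x) = ℓ+m−a−b+dt+s+1` where `x = (a, b−dℓ)` with `2 ≤ b ≤ ℓ+1`, `d ≥ 0`. -/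
def hst (m l s t : ℤ) (x : Cell) : ℤ :=
  l + m - x.1 - x.2 + ((l + 1 - x.2) / l) * (t - l) + s + 1

/-- The hook lengths `h_i` of the bar case: `h_{ℓt+j} = (ℓ+1)t+j = i + (i−1)/ℓ`. -/
def hbar (l i : ℤ) : ℤ := i + (i - 1) / l

/-- The index type of the sum defining `F_{(ℓ,m;s,t)}`: pairs of an `i ≥ 0` and a
lattice path in `L((1,ℓ+1−i),(m,1−i))`. -/
def FstIndex (l m : ℕ) : Type :=
  Σ i : ℕ, ↥(LPath ((1 : ℤ), (l : ℤ) + 1 - (i : ℤ)) ((m : ℤ), 1 - (i : ℤ)))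

/-- The summand `Π_{x ∈ p} 1/h^{s,t}_{m,ℓ}(x)`. -/
noncomputable def FstTerm (l m s t : ℕ) (z : FstIndex l m) : ℝ :=
  ∏ᶠ x ∈ (z.2 : Set Cell), ((hst (m : ℤ) (l : ℤ) (s : ℤ) (t : ℤ) x : ℝ))⁻¹

/-- `F_{(ℓ,m;s,t)} = Σ_{i=0}^∞ Σ_{p ∈ L((1,ℓ+1−i),(m,1−i))} Π_{x ∈ p} 1/h^{s,t}_{m,ℓ}(x)`. -/
noncomputable def Fst (l m s t : ℕ) : ℝ := ∑' z : FstIndex l m, FstTerm l m s t z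

/-- The finite sum `F_{(ℓ,m;s)} = Σ_{p ∈ L((1,ℓ+1),(m,2))} Π_{x ∈ p} 1/(h_{m,ℓ}(x)+s−1)`,
where `h_{m,ℓ}(a,b) = ℓ+m−a−b+2`. -/
noncomputable def Fσ (l m s : ℕ) : ℝ :=
  ∑ᶠ p ∈ LPath ((1 : ℤ), (l : ℤ) + 1) ((m : ℤ), 2),
    ∏ᶠ x ∈ p, (((l : ℝ) + (m : ℝ) - ((x.1 : ℤ) : ℝ) - ((x.2 : ℤ) : ℝ) + 2 + (s : ℝ) - 1))⁻¹

/-!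
Write `F_{(ℓ,m;s,t)} = Σ_i P(u_i, v_i)`, where `P(u, v)` is the sum over `L(u, v)` of the products
of the weights `1/h^{s,t}_{m,ℓ}`, `u_i = (1, ℓ+1−i)` and `v_i = (m, 1−i)`. Splitting a path at
its last cell, resp. at its first cell, expresses `h(v_i)·P(u_i,v_i)`, resp. `h(u_i)·P(u_i,v_i)`,
as a sum of two path sums; as `h(v_i) − h(u_i) = t − m + 1`, subtracting gives
`(t−m+1)·P(u_i,v_i) = P(u_i, v_i−(1,0)) − P(u_i+(1,0), v_i)`
`                    + P(u_i, v_i+(0,1)) − P(u_i+(0,−1), v_i)`.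
The weights are unchanged under `(m, s) ↦ (m−1, s+1)`, and under `m ↦ m−1` they are the old
weights shifted by `(1,0)`, so the first two terms are the `i`-th columns of `F_{(ℓ,m−1;s+1,t)}`
and `F_{(ℓ,m−1;s,t)}`; the last two telescope in `i`, leaving the `i = 0` term `F_{(ℓ,m;s)}`.
Convergence: both endpoint weights of the `i`-th column are at most `ℓ/(i+1)`, all weights lie in
`[0,1]`, and the number of paths does not depend on `i`.
-/

open Set Function

theorem stepRel_iff {a b : Cell} : stepRel a b ↔ b = a + (1, 0) ∨ b = a + (0, -1) := by
  simp only [stepRel, sub_eq_iff_eq_add']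

theorem stepRel.le {a b : Cell} (h : stepRel a b) : a.1 ≤ b.1 ∧ b.2 ≤ a.2 := by
  rcases stepRel_iff.mp h with rfl | rfl <;> simp

namespace LPath

variable {u v w : Cell} {S : Set Cell}

theorem subset_box (hS : S ∈ LPath u v) : S ⊆ Icc u.1 v.1 ×ˢ Icc v.2 u.2 := by
  obtain ⟨p, ⟨hh, hl, hc⟩, rfl⟩ := hS
  intro x hx
  have from_u := hc.induction (fun x => u.1 ≤ x.1 ∧ x.2 ≤ u.2) p
    (fun a b hab ha => ⟨ha.1.trans hab.le.1, hab.le.2.trans ha.2⟩)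
    (fun hne => by rw [(List.head_eq_iff_head?_eq_some hne).mpr hh]; exact ⟨le_rfl, le_rfl⟩) x hx
  have to_v := hc.backwards_induction (fun x => x.1 ≤ v.1 ∧ v.2 ≤ x.2) p
    (fun a b hab hb => ⟨hab.le.1.trans hb.1, hb.2.trans hab.le.2⟩)
    (fun _ => by rw [List.getLast_of_mem_getLast? hl]; exact ⟨le_rfl, le_rfl⟩) x hx
  exact ⟨⟨from_u.1, to_v.1⟩, ⟨to_v.2, from_u.2⟩⟩

theorem left_mem (hS : S ∈ LPath u v) : u ∈ S := by
  obtain ⟨p, ⟨hh, -, -⟩, rfl⟩ := hS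
  exact List.mem_of_mem_head? hh

theorem right_mem (hS : S ∈ LPath u v) : v ∈ S := by
  obtain ⟨p, ⟨-, hl, -⟩, rfl⟩ := hS
  exact List.mem_of_mem_getLast? hl

theorem finite_of_mem (hS : S ∈ LPath u v) : S.Finite :=
  ((finite_Icc _ _).prod (finite_Icc _ _)).subset (subset_box hS)

protected theorem finite (u v : Cell) : (LPath u v).Finite :=
  ((finite_Icc _ _).prod (finite_Icc _ _)).finite_subsets.subset fun _ => subset_box

theorem not_mem_of_stepRel (hw : stepRel u w) (hS : S ∈ LPath w v) : u ∉ S := by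
  intro hu
  have hbox := subset_box hS hu
  simp only [mem_prod, mem_Icc] at hbox
  rcases stepRel_iff.mp hw with rfl | rfl <;> simp at hbox

theorem insert_mem (hw : stepRel u w) (hS : S ∈ LPath w v) : insert u S ∈ LPath u v := by
  obtain ⟨p, ⟨hh, hl, hc⟩, rfl⟩ := hS
  obtain ⟨q, rfl⟩ : ∃ q, p = w :: q := ⟨p.tail, (List.cons_head?_tail hh).symm⟩
  refine ⟨u :: w :: q, ⟨rfl, by rwa [List.getLast?_cons_cons], hc.cons_cons hw⟩, ?_⟩
  ext; simp

theorem exists_insert_eq (huv : u ≠ v) (hS : S ∈ LPath u v) :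
    ∃ w, stepRel u w ∧ ∃ S' ∈ LPath w v, S = insert u S' := by
  obtain ⟨p, ⟨hh, hl, hc⟩, rfl⟩ := hS
  obtain ⟨q, rfl⟩ : ∃ q, p = u :: q := ⟨p.tail, (List.cons_head?_tail hh).symm⟩
  rcases q with _ | ⟨w, q⟩
  · simp at hl; exact absurd hl huv
  refine ⟨w, (List.isChain_cons_cons.mp hc).1, {x | x ∈ w :: q},
    ⟨w :: q, ⟨rfl, by rwa [List.getLast?_cons_cons] at hl, (List.isChain_cons_cons.mp hc).2⟩,
      rfl⟩, ?_⟩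
  ext; simp

theorem eq_image_insert (huv : u ≠ v) :
    LPath u v = insert u '' (LPath (u + (1, 0)) v ∪ LPath (u + (0, -1)) v) := by
  ext S
  constructor
  · intro hS
    obtain ⟨w, hw, S', hS', rfl⟩ := exists_insert_eq huv hS
    rcases stepRel_iff.mp hw with rfl | rfl
    exacts [⟨S', Or.inl hS', rfl⟩, ⟨S', Or.inr hS', rfl⟩]
  · rintro ⟨S', hS' | hS', rfl⟩
    exacts [insert_mem (stepRel_iff.mpr (Or.inl rfl)) hS',
      insert_mem (stepRel_iff.mpr (Or.inr rfl)) hS']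

theorem disjoint_right_down : Disjoint (LPath (u + (1, 0)) v) (LPath (u + (0, -1)) v) := by
  refine disjoint_left.mpr fun S hright hdown => ?_
  have hbox := subset_box hright (left_mem hdown)
  simp only [mem_prod, mem_Icc] at hbox
  simp at hbox

theorem image_mem {f : Cell → Cell} (hf : ∀ a b, stepRel a b → stepRel (f a) (f b))
    (hS : S ∈ LPath u v) : f '' S ∈ LPath (f u) (f v) := by
  obtain ⟨p, ⟨hh, hl, hc⟩, rfl⟩ := hS
  refine ⟨p.map f, ⟨by simp [hh], by simp [hl], List.isChain_map_of_isChain f hf hc⟩, ?_⟩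
  ext; simp

theorem neg_image_mem (hS : S ∈ LPath u v) : Neg.neg '' S ∈ LPath (-v) (-u) := by
  obtain ⟨p, ⟨hh, hl, hc⟩, rfl⟩ := hS
  refine ⟨(p.map Neg.neg).reverse, ⟨by simp [hl], by simp [hh], ?_⟩, ?_⟩
  · refine List.isChain_reverse.mpr (List.isChain_map_of_isChain _ (fun a b hab => ?_) hc)
    simpa only [flip, stepRel, neg_sub_neg] using hab
  · ext; simp

theorem add_eq_image (u v e : Cell) :
    LPath (u + e) (v + e) = image (· + e) '' LPath u v := by
  have hstep : ∀ e : Cell, ∀ a b, stepRel a b → stepRel (a + e) (b + e) := by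
    simp [stepRel]
  ext T
  refine ⟨fun hT => ⟨(· + -e) '' T, by simpa using image_mem (hstep (-e)) hT, ?_⟩, ?_⟩
  · ext; simp
  · rintro ⟨S, hS, rfl⟩
    exact image_mem (hstep e) hS

theorem neg_eq_image (u v : Cell) : LPath (-v) (-u) = image Neg.neg '' LPath u v := by
  ext T
  refine ⟨fun hT => ⟨Neg.neg '' T, by simpa using neg_image_mem hT, by simp⟩, ?_⟩
  rintro ⟨S, hS, rfl⟩
  exact neg_image_mem hS

theorem ncard_add (u v e : Cell) : (LPath (u + e) (v + e)).ncard = (LPath u v).ncard := by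
  rw [add_eq_image, ncard_image_of_injective _ (image_injective.mpr (add_left_injective e))]

end LPath

noncomputable def pathSum (g : Cell → ℝ) (u v : Cell) : ℝ := ∑ᶠ S ∈ LPath u v, ∏ᶠ x ∈ S, g x

section PathSum

variable (g : Cell → ℝ) {u v : Cell}

theorem pathSum_eq_of_eq_image {φ : Cell → Cell} (hφ : Injective φ) {u' v' : Cell}
    (h : LPath u' v' = image φ '' LPath u v) : pathSum g u' v' = pathSum (g ∘ φ) u v := by
  rw [pathSum, h, finsum_mem_image (image_injective.mpr hφ).injOn]
  exact finsum_mem_congr rfl fun S _ => finprod_mem_image hφ.injOn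

theorem pathSum_add (u v e : Cell) :
    pathSum g (u + e) (v + e) = pathSum (fun x => g (x + e)) u v :=
  pathSum_eq_of_eq_image g (add_left_injective e) (LPath.add_eq_image u v e)

theorem pathSum_neg (u v : Cell) : pathSum (fun x => g (-x)) (-v) (-u) = pathSum g u v := by
  simp [pathSum_eq_of_eq_image _ neg_injective (LPath.neg_eq_image u v), comp_def]

theorem pathSum_eq_mul_first (huv : u ≠ v) :
    pathSum g u v = g u * (pathSum g (u + (1, 0)) v + pathSum g (u + (0, -1)) v) := by
  have hu : ∀ S ∈ LPath (u + (1, 0)) v ∪ LPath (u + (0, -1)) v, u ∉ S := by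
    rintro S (hS | hS)
    exacts [LPath.not_mem_of_stepRel (stepRel_iff.mpr (Or.inl rfl)) hS,
      LPath.not_mem_of_stepRel (stepRel_iff.mpr (Or.inr rfl)) hS]
  have hinj : InjOn (insert u) (LPath (u + (1, 0)) v ∪ LPath (u + (0, -1)) v) :=
    fun S hS S' hS' h => by
      rw [← insert_sdiff_self_of_notMem (hu S hS), h, insert_sdiff_self_of_notMem (hu S' hS')]
  rw [pathSum, LPath.eq_image_insert huv, finsum_mem_image hinj,
    finsum_mem_congr rfl fun S hS => finprod_mem_insert g (hu S hS)
      (hS.elim LPath.finite_of_mem LPath.finite_of_mem),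
    finsum_mem_union LPath.disjoint_right_down (LPath.finite _ _) (LPath.finite _ _),
    pathSum, pathSum, mul_add, mul_finsum_mem, mul_finsum_mem]

theorem pathSum_eq_mul_last (huv : u ≠ v) :
    pathSum g u v = g v * (pathSum g u (v - (1, 0)) + pathSum g u (v + (0, 1))) := by
  have hneg : -v + (1, 0) = -(v - (1, 0)) ∧ -v + (0, -1) = -(v + (0, 1)) := by
    constructor <;> ext <;> simp <;> abel
  rw [← pathSum_neg, pathSum_eq_mul_first _ (neg_injective.ne huv.symm), hneg.1, hneg.2,
    pathSum_neg, pathSum_neg, neg_neg]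

end PathSum

theorem finprod_mem_le_mul {α : Type*} {f : α → ℝ} {S : Set α} (hS : S.Finite)
    (hf : ∀ x ∈ S, f x ∈ Icc 0 1) {a b : α} (ha : a ∈ S) (hb : b ∈ S) (hab : a ≠ b) :
    ∏ᶠ x ∈ S, f x ≤ f a * f b := by
  classical
  have hsub : ({a, b} : Finset α) ⊆ hS.toFinset :=
    Finset.insert_subset_iff.mpr
      ⟨hS.mem_toFinset.mpr ha, Finset.singleton_subset_iff.mpr (hS.mem_toFinset.mpr hb)⟩
  have hrest : ∀ x ∈ hS.toFinset \ {a, b}, f x ∈ Icc 0 1 :=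
    fun x hx => hf x (hS.mem_toFinset.mp (Finset.mem_sdiff.mp hx).1)
  rw [finprod_mem_eq_finite_toFinset_prod _ hS, ← Finset.prod_sdiff hsub, Finset.prod_pair hab]
  exact mul_le_of_le_one_left (mul_nonneg (hf a ha).1 (hf b hb).1)
    (Finset.prod_le_one (fun x hx => (hrest x hx).1) (fun x hx => (hrest x hx).2))

section PathSumBounds

variable {g : Cell → ℝ} {u v : Cell}

theorem pathSum_nonneg (hg : ∀ x ∈ Icc u.1 v.1 ×ˢ Icc v.2 u.2, 0 ≤ g x) :
    0 ≤ pathSum g u v :=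
  finsum_nonneg fun _ => finsum_nonneg fun hS => finprod_nonneg fun x => finprod_nonneg
    fun hx => hg x (LPath.subset_box hS hx)

theorem pathSum_le_ncard_mul (hg : ∀ x ∈ Icc u.1 v.1 ×ˢ Icc v.2 u.2, g x ∈ Icc 0 1)
    (huv : u ≠ v) : pathSum g u v ≤ (LPath u v).ncard * (g u * g v) := by
  have hfin := LPath.finite u v
  rw [pathSum, finsum_mem_eq_finite_toFinset_sum _ hfin, ncard_eq_toFinset_card _ hfin,
    ← nsmul_eq_mul]
  refine Finset.sum_le_card_nsmul _ _ _ fun S hS => ?_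
  have hS := hfin.mem_toFinset.mp hS
  exact finprod_mem_le_mul (LPath.finite_of_mem hS) (fun x hx => hg x (LPath.subset_box hS hx))
    (LPath.left_mem hS) (LPath.right_mem hS) huv

theorem inv_sub_inv_mul_pathSum (huv : u ≠ v) (hu : g u ≠ 0) (hv : g v ≠ 0) :
    ((g v)⁻¹ - (g u)⁻¹) * pathSum g u v =
      pathSum g u (v - (1, 0)) + pathSum g u (v + (0, 1)) -
        (pathSum g (u + (1, 0)) v + pathSum g (u + (0, -1)) v) := by
  rw [sub_mul]
  nth_rw 1 [pathSum_eq_mul_last g huv]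
  rw [pathSum_eq_mul_first g huv, inv_mul_cancel_left₀ hv, inv_mul_cancel_left₀ hu]

end PathSumBounds

noncomputable def hstWeight (m l s t : ℤ) (x : Cell) : ℝ := ((hst m l s t x : ℤ) : ℝ)⁻¹

section Hooks

variable {m l s t : ℤ} {x : Cell}

theorem hst_eq_emod_ediv (m l s t : ℤ) (x : Cell) :
    hst m l s t x = m - x.1 + s + (l + 1 - x.2) % l + (l + 1 - x.2) / l * t := by
  have := Int.mul_ediv_add_emod (l + 1 - x.2) l
  unfold hst
  linear_combination -this

theorem one_le_hst (hl : 0 < l) (hs : 1 ≤ s) (ht : 0 ≤ t) (hx₁ : x.1 ≤ m) (hx₂ : x.2 ≤ l + 1) :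
    1 ≤ hst m l s t x := by
  have hmod := Int.emod_nonneg (l + 1 - x.2) hl.ne'
  have hdiv : 0 ≤ (l + 1 - x.2) / l := Int.ediv_nonneg (by omega) hl.le
  rw [hst_eq_emod_ediv]
  nlinarith

theorem add_two_sub_le_mul_hst (hl : 0 < l) (hs : 1 ≤ s) (ht : 1 ≤ t) (hx₁ : x.1 ≤ m)
    (hx₂ : x.2 ≤ l + 1) : l + 2 - x.2 ≤ l * hst m l s t x := by
  have hsplit := Int.mul_ediv_add_emod (l + 1 - x.2) l
  have hmod := Int.emod_nonneg (l + 1 - x.2) hl.ne'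
  have hdiv : 0 ≤ (l + 1 - x.2) / l := Int.ediv_nonneg (by omega) hl.le
  rw [hst_eq_emod_ediv]
  nlinarith [mul_nonneg hl.le (sub_nonneg.mpr hx₁),
    mul_nonneg (mul_nonneg hl.le hdiv) (sub_nonneg.mpr ht)]

theorem hstWeight_mem_Icc (hl : 0 < l) (hs : 1 ≤ s) (ht : 0 ≤ t) (hx₁ : x.1 ≤ m)
    (hx₂ : x.2 ≤ l + 1) : hstWeight m l s t x ∈ Icc 0 1 := by
  have h : (1 : ℝ) ≤ hst m l s t x := by exact_mod_cast one_le_hst hl hs ht hx₁ hx₂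
  exact ⟨inv_nonneg.mpr (zero_le_one.trans h), inv_le_one_of_one_le₀ h⟩

theorem hstWeight_le_div (hl : 0 < l) (hs : 1 ≤ s) (ht : 1 ≤ t) (hx₁ : x.1 ≤ m) {k : ℕ}
    (hk : k ≤ l + 1 - x.2) : hstWeight m l s t x ≤ l / (k + 1) := by
  have h : (k + 1 : ℝ) ≤ l * hst m l s t x := by
    exact_mod_cast (by omega : (k : ℤ) + 1 ≤ l + 2 - x.2).trans
      (add_two_sub_le_mul_hst hl hs ht hx₁ (by omega))
  have hpos : (0 : ℝ) < hst m l s t x := by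
    exact_mod_cast one_le_hst hl hs (by omega) hx₁ (by omega)
  rw [hstWeight, inv_eq_one_div, div_le_div_iff₀ hpos (by positivity)]
  linarith

theorem hstWeight_sub_one_add_one (m l s t : ℤ) :
    hstWeight (m - 1) l (s + 1) t = hstWeight m l s t := by
  ext x; unfold hstWeight hst; ring_nf

theorem hstWeight_sub_one (m l s t : ℤ) :
    hstWeight (m - 1) l s t = fun x => hstWeight m l s t (x + (1, 0)) := by
  ext x; simp only [hstWeight, hst, Prod.fst_add, Prod.snd_add, add_zero]; ring_nf

theorem hstWeight_ne_zero (hl : 0 < l) (hs : 1 ≤ s) (ht : 0 ≤ t) (hx₁ : x.1 ≤ m)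
    (hx₂ : x.2 ≤ l + 1) : hstWeight m l s t x ≠ 0 :=
  inv_ne_zero (Int.cast_ne_zero.mpr (by linarith [one_le_hst hl hs ht hx₁ hx₂]))

theorem hst_last_sub_hst_first (hl : l ≠ 0) (i : ℤ) :
    hst m l s t (m, 1 - i) - hst m l s t (1, l + 1 - i) = t - m + 1 := by
  have hdiv : (i + l) / l = i / l + 1 := by simpa using Int.add_mul_ediv_right i 1 hl
  simp only [hst, show l + 1 - (1 - i) = i + l by ring, show l + 1 - (l + 1 - i) = i by ring, hdiv]
  ring

theorem hst_of_two_le (hx₂ : 2 ≤ x.2) (hx₂' : x.2 ≤ l + 1) :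
    hst m l s t x = l + m - x.1 - x.2 + 2 + s - 1 := by
  simp only [hst, Int.ediv_eq_zero_of_lt (a := l + 1 - x.2) (b := l) (by omega) (by omega)]
  ring

end Hooks

theorem summable_div_add_one_sq (c : ℝ) : Summable fun i : ℕ => (c / (i + 1)) ^ 2 := by
  have h := (summable_nat_add_iff 1).mpr (Real.summable_one_div_nat_pow.mpr one_lt_two)
  refine (h.mul_left (c ^ 2)).congr fun i => ?_
  push_cast
  rw [div_pow, mul_one_div]

theorem hasSum_sub_succ {α : Type*} [AddCommGroup α] [TopologicalSpace α]
    [IsTopologicalAddGroup α] {f : ℕ → α} (hf : Summable f) :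
    HasSum (fun i => f i - f (i + 1)) (f 0) := by
  have htail := ((summable_nat_add_iff 1).mpr hf).hasSum
  simpa using (HasSum.zero_add (f := f) htail).sub htail

theorem summable_pathSum_hstWeight {m l s t : ℤ} (hl : 0 < l) (hs : 1 ≤ s) (ht : 1 ≤ t)
    {a c b : ℤ} (ha : a ≤ m) (hc : c ≤ m) (hb : b ≤ l + 1)
    (hne : ((a, l + 1) : Cell) ≠ (c, b)) :
    Summable fun i : ℕ => pathSum (hstWeight m l s t) (a, l + 1 - i) (c, b - i) := by
  set N := (LPath (a, l + 1) (c, b)).ncard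
  refine .of_nonneg_of_le (fun i => pathSum_nonneg fun x hx => ?_) (fun i => ?_)
    ((summable_div_add_one_sq l).mul_left (N : ℝ))
  · simp only [mem_prod, mem_Icc] at hx
    exact (hstWeight_mem_Icc hl hs (by omega) (by omega) (by omega)).1
  have hu := hstWeight_le_div (x := (a, l + 1 - i)) (m := m) hl hs ht ha (k := i) (by simp)
  have hv := hstWeight_le_div (x := (c, b - i)) hl hs ht hc (k := i) (by simp; omega)
  have hshift : ∀ y : Cell, (y.1, y.2 - i) = y + (0, -(i : ℤ)) := fun y => by
    ext <;> simp [sub_eq_add_neg]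
  have hN : (LPath (a, l + 1 - i) (c, b - i)).ncard = N := by
    rw [hshift (a, l + 1), hshift (c, b), LPath.ncard_add]
  calc pathSum (hstWeight m l s t) (a, l + 1 - i) (c, b - i)
      ≤ N * (hstWeight m l s t (a, l + 1 - i) * hstWeight m l s t (c, b - i)) := by
        rw [← hN]
        refine pathSum_le_ncard_mul (fun x hx => ?_) ?_
        · simp only [mem_prod, mem_Icc] at hx
          exact hstWeight_mem_Icc hl hs (by omega) (by omega) (by omega)
        · intro h; apply hne; simp only [Prod.ext_iff] at h ⊢; omega
    _ ≤ N * (l / (i + 1)) ^ 2 := by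
        rw [sq]
        gcongr
        exact (hstWeight_mem_Icc hl hs (by omega) hc (by simp; omega)).1

noncomputable def FstColumn (l m s t : ℕ) (i : ℕ) : ℝ :=
  pathSum (hstWeight m l s t) (1, l + 1 - i) (m, 1 - i)

noncomputable def FσColumn (l m s t : ℕ) (i : ℕ) : ℝ :=
  pathSum (hstWeight m l s t) (1, l + 1 - i) (m, 2 - i)

section Columns

variable {l m s t : ℕ}

theorem summable_FstColumn (hl : 1 ≤ l) (hm : 1 ≤ m) (hs : 1 ≤ s) (ht : 1 ≤ t) :
    Summable (FstColumn l m s t) :=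
  summable_pathSum_hstWeight (by omega) (by omega) (by omega) (by omega) le_rfl (by omega)
    (by simp; omega)

theorem summable_FσColumn (hl : 1 ≤ l) (hm : 2 ≤ m) (hs : 1 ≤ s) (ht : 1 ≤ t) :
    Summable (FσColumn l m s t) :=
  summable_pathSum_hstWeight (by omega) (by omega) (by omega) (by omega) le_rfl (by omega)
    (by simp; omega)

theorem FσColumn_zero (l m s t : ℕ) : FσColumn l m s t 0 = Fσ l m s := by
  refine (finsum_mem_congr (by simp) fun S hS => finprod_mem_congr rfl fun x hx => ?_).symm
  have hbox := LPath.subset_box hS hx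
  simp only [mem_prod, mem_Icc] at hbox
  rw [hstWeight, hst_of_two_le hbox.2.1 hbox.2.2]
  push_cast
  ring

theorem FstTerm_nonneg (hl : 1 ≤ l) (hs : 1 ≤ s) (z : FstIndex l m) : 0 ≤ FstTerm l m s t z := by
  obtain ⟨i, S, hS⟩ := z
  refine finprod_nonneg fun x => finprod_nonneg fun hx => ?_
  have hbox := LPath.subset_box hS hx
  simp only [mem_prod, mem_Icc] at hbox
  exact (hstWeight_mem_Icc (by omega) (by omega) (by omega) (by omega) (by omega)).1

theorem hasSum_FstTerm (hl : 1 ≤ l) (hm : 1 ≤ m) (hs : 1 ≤ s) (ht : 1 ≤ t) :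
    HasSum (FstTerm l m s t) (∑' i, FstColumn l m s t i) := by
  have hfibre (i : ℕ) : HasSum (fun S => FstTerm l m s t ⟨i, S⟩) (FstColumn l m s t i) := by
    have := (LPath.finite ((1 : ℤ), (l : ℤ) + 1 - i) ((m : ℤ), 1 - i)).to_subtype
    rw [FstColumn, pathSum, ← finsum_set_coe_eq_finsum_mem,
      ← tsum_eq_finsum (L := SummationFilter.unconditional _) (toFinite _)]
    exact Summable.of_finite.hasSum
  have hcolumns := summable_FstColumn hl hm hs ht
  refine hcolumns.hasSum.sigma_of_hasSum hfibre
    ((summable_sigma_of_nonneg (FstTerm_nonneg hl hs)).mpr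
      ⟨fun i => (hfibre i).summable, hcolumns.congr fun i => (hfibre i).tsum_eq.symm⟩)

theorem FstColumn_recursion (hl : 1 ≤ l) (hm : 2 ≤ m) (hs : 1 ≤ s) (ht : 1 ≤ t) (i : ℕ) :
    ((t : ℝ) - m + 1) * FstColumn l m s t i =
      FstColumn l (m - 1) (s + 1) t i - FstColumn l (m - 1) s t i +
        (FσColumn l m s t i - FσColumn l m s t (i + 1)) := by
  set g := hstWeight m l s t
  set u : Cell := (1, l + 1 - i)
  set v : Cell := (m, 1 - i)
  have key := inv_sub_inv_mul_pathSum (g := g) (u := u) (v := v) (by simp [u, v]; omega)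
    (hstWeight_ne_zero (by omega) (by omega) (by omega) (by simp [u]; omega) (by simp [u]))
    (hstWeight_ne_zero (by omega) (by omega) (by omega) le_rfl (by simp [v]; omega))
  have hdiff : (g v)⁻¹ - (g u)⁻¹ = (t : ℝ) - m + 1 := by
    have h := hst_last_sub_hst_first (m := m) (l := l) (s := s) (t := t) (by omega) i
    simp only [g, u, v, hstWeight, inv_inv, ← Int.cast_sub, h]
    push_cast
    ring
  have hB : FstColumn l (m - 1) (s + 1) t i = pathSum g u (v - (1, 0)) := by
    rw [FstColumn, Nat.cast_sub (by omega), Nat.cast_add, Nat.cast_one, hstWeight_sub_one_add_one]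
    congr 1; ext <;> simp [v]
  have hD : FstColumn l (m - 1) s t i = pathSum g (u + (1, 0)) v := by
    rw [FstColumn, Nat.cast_sub (by omega), Nat.cast_one, hstWeight_sub_one, ← pathSum_add]
    congr 1; ext <;> simp [v]
  have hC : FσColumn l m s t i = pathSum g u (v + (0, 1)) := by
    rw [FσColumn]; congr 1; ext <;> simp [v]; ring
  have hC' : FσColumn l m s t (i + 1) = pathSum g (u + (0, -1)) v := by
    rw [FσColumn]; congr 1 <;> ext <;> simp [u, v] <;> ring
  rw [FstColumn, hB, hD, hC, hC', ← hdiff, key]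
  ring

end Columns

/-- **Lemma 7.7 (recursion)**:
`(t−m+1)·F_{(ℓ,m;s,t)} = F_{(ℓ,m;s)} + F_{(ℓ,m−1;s+1,t)} − F_{(ℓ,m−1;s,t)}`,
all three infinite sums being convergent. -/
theorem Fst_recursion (l m s t : ℕ) (hl : 1 ≤ l) (hm : 2 ≤ m) (hs : 1 ≤ s) (ht : 1 ≤ t) :
    Summable (FstTerm l m s t) ∧
    Summable (FstTerm l (m - 1) (s + 1) t) ∧
    Summable (FstTerm l (m - 1) s t) ∧
    ((t : ℝ) - (m : ℝ) + 1) * Fst l m s t =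
      Fσ l m s + Fst l (m - 1) (s + 1) t - Fst l (m - 1) s t := by
  have hA := hasSum_FstTerm (m := m) (s := s) (t := t) hl (by omega) hs ht
  have hB := hasSum_FstTerm (m := m - 1) (s := s + 1) (t := t) hl (by omega) (by omega) ht
  have hD := hasSum_FstTerm (m := m - 1) (s := s) (t := t) hl (by omega) hs ht
  refine ⟨hA.summable, hB.summable, hD.summable, ?_⟩
  have hrhs :=
    ((summable_FstColumn (m := m - 1) (s := s + 1) hl (by omega) (by omega) ht).hasSum.sub
      (summable_FstColumn (m := m - 1) hl (by omega) hs ht).hasSum).add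
    (hasSum_sub_succ (summable_FσColumn hl hm hs ht))
  rw [← funext (FstColumn_recursion hl hm hs ht)] at hrhs
  rw [Fst, Fst, Fst, hA.tsum_eq, hB.tsum_eq, hD.tsum_eq, ← FσColumn_zero l m s t,
    ((summable_FstColumn hl (by omega) hs ht).hasSum.mul_left _).unique hrhs]
  ring
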